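/- arXiv:2308.05020 — 2 statements merged into one kernel-verified Lean document; each statement's English description precedes it below -/
import Mathlib

section
/- Let (G,w) be an edge-weighted graph and x^a an exponent vector such that a_i < w(e) for every edge e incident to vertex x_i. Then sqrt(I(G_w) : x^a) = sqrt(I(G_w) : x^b), where b is obtained from a by setting the i-th coordinate to 0. -/
/-!
The inclusion `(I : x^b) ⊆ (I : x^a)` holds because `x^b ∣ x^a`. Conversely, since `I` is a
monomial ideal, `f x^a ∈ I` gives `x^m x^a ∈ I` for every monomial `x^m` of `f`, and it suffices to
put each such `x^m` into `√(I : x^b)`. Let `(x_j x_k)^{w(jk)}` divide `x^m x^a`. If `i ∉ {j, k}`, it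
also divides `x^m x^b`. If the edge is `{i, k}`, then `a_i < w(ik)` forces `m_i ≥ 1`, so
`(x_i x_k)^{w(ik)}` divides `(x^m)^{w(ik)} x^b`.
-/

open MvPolynomial

namespace Finsupp

variable {σ : Type*}

theorem smul_single_add_single_le_smul_add_update_zero {i k : σ} (hik : i ≠ k) {c : ℕ}
    {m a : σ →₀ ℕ} (hc : a i < c) (h : c • (single i 1 + single k 1) ≤ m + a) :
    c • (single i 1 + single k 1) ≤ c • m + a.update i 0 := by
  classical
  have hi := h i
  have hk := h k
  simp only [coe_add, coe_smul, Pi.add_apply, Pi.smul_apply, smul_eq_mul, single_eq_same,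
    single_eq_of_ne hik, single_eq_of_ne hik.symm] at hi hk
  intro l
  by_cases hli : l = i
  · subst hli
    have hml : c ≤ c * m l := Nat.le_mul_of_pos_right c (by omega)
    simpa [hik.symm] using hml
  · by_cases hlk : l = k
    · subst hlk
      have hml : c ≤ c * m l + a l := by nlinarith
      simpa [hli] using hml
    · simp [single_eq_of_ne hli, single_eq_of_ne hlk]

theorem le_add_update_zero_of_apply_eq_zero {s m a : σ →₀ ℕ} {i : σ} (hsi : s i = 0)
    (h : s ≤ m + a) : s ≤ m + a.update i 0 := by
  classical
  intro l
  by_cases hli : l = i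
  · simp [hli, hsi]
  · simpa [update_apply, hli] using h l

theorem equivFunOnFinite_symm_update {M : Type*} [Zero M] [Finite σ] [DecidableEq σ] (f : σ → M)
    (i : σ) (b : M) :
    equivFunOnFinite.symm (Function.update f i b) = (equivFunOnFinite.symm f).update i b := by
  ext l
  simp [update_apply, Function.update_apply]

end Finsupp

namespace SimpleGraph

variable {σ : Type*}

def weightedEdgeExponents (G : SimpleGraph σ) (w : σ → σ → ℕ) : Set (σ →₀ ℕ) :=
  {s | ∃ j k, G.Adj j k ∧ s = w j k • (Finsupp.single j 1 + Finsupp.single k 1)}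

theorem exists_weightedEdgeExponent_le_smul_add_update_zero {G : SimpleGraph σ}
    {w : σ → σ → ℕ} (hsym : ∀ j k, w j k = w k j) {a : σ →₀ ℕ} {i : σ}
    (ha : ∀ j, G.Adj i j → a i < w i j) {m : σ →₀ ℕ}
    (h : ∃ s ∈ G.weightedEdgeExponents w, s ≤ m + a) :
    ∃ N : ℕ, ∃ s ∈ G.weightedEdgeExponents w, s ≤ N • m + a.update i 0 := by
  obtain ⟨_, ⟨j, k, hjk, rfl⟩, hle⟩ := h
  by_cases hj : j = i
  · subst hj
    exact ⟨_, _, ⟨j, k, hjk, rfl⟩,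
      Finsupp.smul_single_add_single_le_smul_add_update_zero hjk.ne (ha k hjk) hle⟩
  by_cases hk : k = i
  · subst hk
    rw [hsym, add_comm] at hle
    exact ⟨_, _, ⟨k, j, hjk.symm, rfl⟩,
      Finsupp.smul_single_add_single_le_smul_add_update_zero hjk.ne' (ha j hjk.symm) hle⟩
  refine ⟨1, _, ⟨j, k, hjk, rfl⟩, ?_⟩
  rw [one_smul]
  exact Finsupp.le_add_update_zero_of_apply_eq_zero
    (by simp [Finsupp.single_eq_of_ne' hj, Finsupp.single_eq_of_ne' hk]) hle

end SimpleGraph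

namespace MvPolynomial

variable {σ R : Type*} [CommSemiring R]

theorem prod_X_pow_eq_monomial_equivFunOnFinite [Fintype σ] (c : σ → ℕ) :
    ∏ k, (X k : MvPolynomial σ R) ^ c k = monomial (Finsupp.equivFunOnFinite.symm c) 1 := by
  rw [monomial_eq, C_1, one_mul, Finsupp.prod_fintype _ _ fun _ => pow_zero _]
  rfl

theorem mem_of_forall_monomial_mem {J : Ideal (MvPolynomial σ R)} {f : MvPolynomial σ R}
    (h : ∀ m ∈ f.support, monomial m 1 ∈ J) : f ∈ J := by
  rw [f.as_sum]
  refine J.sum_mem fun m hm => ?_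
  simpa [C_mul_monomial] using J.mul_mem_left (C (coeff m f)) (h m hm)

theorem exists_le_add_of_mul_monomial_mem {S : Set (σ →₀ ℕ)} {f : MvPolynomial σ R}
    {a m : σ →₀ ℕ} (hf : f * monomial a 1 ∈ Ideal.span ((fun s => monomial s (1 : R)) '' S))
    (hm : m ∈ f.support) : ∃ s ∈ S, s ≤ m + a :=
  mem_ideal_span_monomial_image.mp hf _ <| by
    rwa [mem_support_iff, coeff_mul_monomial, mul_one, ← mem_support_iff]

theorem monomial_mem_radical_colon {J : Ideal (MvPolynomial σ R)} {m b : σ →₀ ℕ} {N : ℕ}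
    (h : monomial (N • m + b) 1 ∈ J) :
    monomial m 1 ∈ (J.colon (Ideal.span {monomial b (1 : R)})).radical :=
  ⟨N, Ideal.mem_colon_span_singleton.mpr <| by rwa [monomial_pow, monomial_mul, one_pow, one_mul]⟩

theorem colon_monomial_mono {J : Ideal (MvPolynomial σ R)} {a b : σ →₀ ℕ} (hba : b ≤ a) :
    J.colon (Ideal.span {monomial b (1 : R)}) ≤ J.colon (Ideal.span {monomial a (1 : R)}) :=
  Submodule.colon_mono le_rfl <| Ideal.span_singleton_le_span_singleton.mpr <|
    monomial_dvd_monomial.mpr ⟨Or.inr hba, one_dvd _⟩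

theorem monomial_mem_span_monomial_image {S : Set (σ →₀ ℕ)} {s m : σ →₀ ℕ} (hs : s ∈ S)
    (hsm : s ≤ m) : monomial m (1 : R) ∈ Ideal.span ((fun s => monomial s (1 : R)) '' S) :=
  Ideal.mem_of_dvd _ (monomial_dvd_monomial.mpr ⟨Or.inr hsm, one_dvd _⟩)
    (Ideal.subset_span ⟨s, hs, rfl⟩)

end MvPolynomial

namespace SimpleGraph

variable {σ : Type*} (R : Type*) [CommSemiring R]

noncomputable def weightedEdgeIdeal (G : SimpleGraph σ) (w : σ → σ → ℕ) :
    Ideal (MvPolynomial σ R) :=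
  Ideal.span {p | ∃ i j, G.Adj i j ∧ p = (X i * X j) ^ w i j}

variable {R}

theorem weightedEdgeIdeal_eq_span_monomial (G : SimpleGraph σ) (w : σ → σ → ℕ) :
    G.weightedEdgeIdeal R w =
      Ideal.span ((fun s => monomial s (1 : R)) '' G.weightedEdgeExponents w) := by
  have hpow : ∀ j k, (X j * X k : MvPolynomial σ R) ^ w j k =
      monomial (w j k • (Finsupp.single j 1 + Finsupp.single k 1)) 1 := by
    intro j k
    rw [X, X, monomial_mul, monomial_pow, one_mul, one_pow]
  unfold weightedEdgeIdeal weightedEdgeExponents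
  congr 1
  ext p
  simp only [Set.mem_ofPred_eq, Set.mem_image, hpow]
  constructor
  · rintro ⟨j, k, hjk, rfl⟩
    exact ⟨_, ⟨j, k, hjk, rfl⟩, rfl⟩
  · rintro ⟨_, ⟨j, k, hjk, rfl⟩, rfl⟩
    exact ⟨j, k, hjk, rfl⟩

theorem radical_colon_monomial_update_zero (G : SimpleGraph σ) {w : σ → σ → ℕ}
    (hsym : ∀ j k, w j k = w k j) {a : σ →₀ ℕ} {i : σ} (ha : ∀ j, G.Adj i j → a i < w i j) :
    ((G.weightedEdgeIdeal R w).colon (Ideal.span {monomial a (1 : R)})).radical =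
      ((G.weightedEdgeIdeal R w).colon (Ideal.span {monomial (a.update i 0) (1 : R)})).radical := by
  classical
  have hle : a.update i 0 ≤ a := fun l => by
    rw [Finsupp.update_apply]; split_ifs <;> simp
  refine le_antisymm ?_ (Ideal.radical_mono (colon_monomial_mono hle))
  rw [Ideal.radical_le_radical_iff, weightedEdgeIdeal_eq_span_monomial]
  intro f hf
  refine mem_of_forall_monomial_mem fun m hm => ?_
  obtain ⟨N, s, hs, hsm⟩ := exists_weightedEdgeExponent_le_smul_add_update_zero hsym ha
    (exists_le_add_of_mul_monomial_mem (Ideal.mem_colon_span_singleton.mp hf) hm)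
  exact monomial_mem_radical_colon (monomial_mem_span_monomial_image hs hsm)

end SimpleGraph

theorem stmt8_general (K : Type*) [Field K] (n : ℕ) (G : SimpleGraph (Fin n))
    (w : Fin n → Fin n → ℕ) (hsym : ∀ i j, w i j = w j i)
    (I : Ideal (MvPolynomial (Fin n) K))
    (hI : I = Ideal.span {p | ∃ i j, G.Adj i j ∧ p = (X i * X j) ^ w i j})
    (a : Fin n → ℕ) (i : Fin n)
    (ha : ∀ j, G.Adj i j → a i < w i j) :
    (Submodule.colon I
        (Ideal.span {∏ k, (X k : MvPolynomial (Fin n) K) ^ a k})).radical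
      = (Submodule.colon I
        (Ideal.span {∏ k, (X k : MvPolynomial (Fin n) K) ^ Function.update a i 0 k})).radical := by
  subst hI
  rw [prod_X_pow_eq_monomial_equivFunOnFinite, prod_X_pow_eq_monomial_equivFunOnFinite,
    Finsupp.equivFunOnFinite_symm_update]
  exact G.radical_colon_monomial_update_zero hsym ha

/-- If `a i < w(e)` for every edge `e` incident to the vertex `i`,
then `√(I(G_w) : x^a) = √(I(G_w) : x^b)` where `b` is `a` with `i`-th entry
replaced by `0`. -/
theorem stmt8 (K : Type*) [Field K] (n : ℕ) (G : SimpleGraph (Fin n))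
    (w : Fin n → Fin n → ℕ) (hsym : ∀ i j, w i j = w j i)
    (hpos : ∀ i j, G.Adj i j → 0 < w i j)
    (I : Ideal (MvPolynomial (Fin n) K))
    (hI : I = Ideal.span {p | ∃ i j, G.Adj i j ∧ p = (X i * X j) ^ w i j})
    (a : Fin n → ℕ) (i : Fin n)
    (ha : ∀ j, G.Adj i j → a i < w i j) :
    (Submodule.colon I
        (Ideal.span {∏ k, (X k : MvPolynomial (Fin n) K) ^ a k})).radical
      = (Submodule.colon I
        (Ideal.span {∏ k, (X k : MvPolynomial (Fin n) K) ^ Function.update a i 0 k})).radical :=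
  stmt8_general K n G w hsym I hI a i ha
end

section
/- Let G be a graph containing an induced cycle C of length t with t not equal to 3 or 5, and define the weight function w by w(e) = 2 for edges e of G[V(C)] and w(e) = 1 otherwise. Then sqrt(I(G_w) : prod_{v in V(C)} v) contains I(C) + (the neighbors of V(C) outside V(C)) and its generators involving only vertices of V(C) are exactly the edges of C. -/
/-!
Every ideal in sight is a monomial ideal, so membership of a monomial `x^e` is a divisibility
question. If `e` is supported on `C`, then `x^e · x_C` is divisible by a generator
`(x_i x_j)^w(ij)` only if both `i, j` lie in `C` (a positive exponent outside `C` is missing), so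
`w(ij) = 2`, and `x^e · x_C` has exponent `≥ 2` at `i` and `j` exactly when `e_i, e_j ≥ 1`. Hence
`x^e ∈ √(I(G_w) : x_C)` iff the support of `e` contains an edge of `G[V(C)]`, i.e. of the induced
cycle `C`. A neighbour `v ∉ C` of `u ∈ C` lies in the colon ideal because `x_u x_v ∣ x_v x_C`.
-/

open MvPolynomial

open Finsupp in
theorem Finsupp.single_add_single_le_iff {σ : Type*} {i j : σ} (hij : i ≠ j) (a : ℕ)
    (e : σ →₀ ℕ) : single i a + single j a ≤ e ↔ a ≤ e i ∧ a ≤ e j := by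
  classical
  refine ⟨fun h => ⟨?_, ?_⟩, fun ⟨hi, hj⟩ v => ?_⟩
  · simpa [hij.symm] using h i
  · simpa [hij] using h j
  · simp only [coe_add, Pi.add_apply, single_apply]
    split_ifs <;> simp_all

theorem Finsupp.finsetSum_single_one_apply {σ : Type*} [DecidableEq σ] (s : Finset σ) (v : σ) :
    (∑ u ∈ s, Finsupp.single u 1 : σ →₀ ℕ) v = if v ∈ s then 1 else 0 := by
  simp [Finsupp.finsetSum_apply, Finsupp.single_apply]

namespace MvPolynomial

variable {σ K : Type*} [CommSemiring K]

theorem X_mul_X_pow_eq_monomial (i j : σ) (a : ℕ) :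
    (X i * X j : MvPolynomial σ K) ^ a = monomial (Finsupp.single i a + Finsupp.single j a) 1 := by
  rw [mul_pow, X_pow_eq_monomial, X_pow_eq_monomial, monomial_mul, one_mul]

theorem monomial_mem_colon_prod_X_iff (I : Ideal (MvPolynomial σ K)) (s : Finset σ)
    (e : σ →₀ ℕ) : monomial e 1 ∈ I.colon (Ideal.span {∏ v ∈ s, (X v : MvPolynomial σ K)}) ↔
      monomial (e + ∑ v ∈ s, Finsupp.single v 1) 1 ∈ I := by
  rw [Ideal.mem_colon_span_singleton]
  change _ * ∏ v ∈ s, monomial (Finsupp.single v 1) 1 ∈ I ↔ _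
  rw [← monomial_sum_one, monomial_mul, one_mul]

variable (K) [DecidableEq σ]

/-- The ideal `I(G_w)` for the weight `w` that is `2` on the edges of `G[s]` and `1` elsewhere. -/
noncomputable def weightedEdgeIdeal (G : SimpleGraph σ) (s : Finset σ) : Ideal (MvPolynomial σ K) :=
  Ideal.span {p | ∃ i j, G.Adj i j ∧ p = (X i * X j) ^ (if i ∈ s ∧ j ∈ s then 2 else 1)}

variable {K} [Nontrivial K] {G : SimpleGraph σ} {s : Finset σ}

theorem monomial_mem_weightedEdgeIdeal_iff (e : σ →₀ ℕ) :
    monomial e (1 : K) ∈ weightedEdgeIdeal K G s ↔ ∃ i j, G.Adj i j ∧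
      (if i ∈ s ∧ j ∈ s then 2 else 1) ≤ e i ∧ (if i ∈ s ∧ j ∈ s then 2 else 1) ≤ e j := by
  classical
  have hgen : {p : MvPolynomial σ K | ∃ i j, G.Adj i j ∧
      p = (X i * X j) ^ (if i ∈ s ∧ j ∈ s then 2 else 1)} =
      (fun d => monomial d 1) '' {d | ∃ i j, G.Adj i j ∧ d =
        Finsupp.single i (if i ∈ s ∧ j ∈ s then 2 else 1) +
          Finsupp.single j (if i ∈ s ∧ j ∈ s then 2 else 1)} := by
    ext p
    simp only [Set.mem_ofPred_eq, Set.mem_image, X_mul_X_pow_eq_monomial]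
    constructor
    · rintro ⟨i, j, hij, rfl⟩
      exact ⟨_, ⟨i, j, hij, rfl⟩, rfl⟩
    · rintro ⟨d, ⟨i, j, hij, rfl⟩, rfl⟩
      exact ⟨i, j, hij, rfl⟩
  rw [weightedEdgeIdeal, hgen, mem_ideal_span_monomial_image, support_monomial,
    if_neg one_ne_zero]
  simp only [Finset.mem_singleton, forall_eq, Set.mem_ofPred_eq]
  constructor
  · rintro ⟨_, ⟨i, j, hij, rfl⟩, hle⟩
    exact ⟨i, j, hij, (Finsupp.single_add_single_le_iff hij.ne _ _).1 hle⟩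
  · rintro ⟨i, j, hij, hle⟩
    exact ⟨_, ⟨i, j, hij, rfl⟩, (Finsupp.single_add_single_le_iff hij.ne _ _).2 hle⟩

theorem monomial_mem_colon_weightedEdgeIdeal_iff {e : σ →₀ ℕ} (he : e.support ⊆ s) :
    monomial e 1 ∈ (weightedEdgeIdeal K G s).colon
        (Ideal.span {∏ v ∈ s, (X v : MvPolynomial σ K)}) ↔
      ∃ i j, G.Adj i j ∧ i ∈ e.support ∧ j ∈ e.support := by
  rw [monomial_mem_colon_prod_X_iff, monomial_mem_weightedEdgeIdeal_iff]
  simp only [Finsupp.add_apply, Finsupp.finsetSum_single_one_apply, Finsupp.mem_support_iff]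
  refine exists₂_congr fun i j => and_congr_right fun _ => ?_
  have hi : i ∉ s → e i = 0 := fun h => Finsupp.notMem_support_iff.1 (mt (@he i) h)
  have hj : j ∉ s → e j = 0 := fun h => Finsupp.notMem_support_iff.1 (mt (@he j) h)
  by_cases hi' : i ∈ s <;> by_cases hj' : j ∈ s <;>
    simp [hi', hj', hi, hj, Nat.one_le_iff_ne_zero]

theorem monomial_mem_radical_colon_weightedEdgeIdeal_iff {e : σ →₀ ℕ} (he : e.support ⊆ s) :
    monomial e 1 ∈ ((weightedEdgeIdeal K G s).colon
        (Ideal.span {∏ v ∈ s, (X v : MvPolynomial σ K)})).radical ↔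
      ∃ i j, G.Adj i j ∧ i ∈ e.support ∧ j ∈ e.support := by
  simp only [Ideal.mem_radical_iff, monomial_pow, one_pow]
  constructor
  · rintro ⟨k, hk⟩
    obtain ⟨i, j, hij, hi, hj⟩ :=
      (monomial_mem_colon_weightedEdgeIdeal_iff (Finsupp.support_smul.trans he)).1 hk
    exact ⟨i, j, hij, Finsupp.support_smul hi, Finsupp.support_smul hj⟩
  · intro h
    exact ⟨1, by rwa [one_smul, monomial_mem_colon_weightedEdgeIdeal_iff he]⟩

theorem X_notMem_radical_colon_weightedEdgeIdeal {v : σ} (hv : v ∈ s) :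
    X v ∉ ((weightedEdgeIdeal K G s).colon
        (Ideal.span {∏ v ∈ s, (X v : MvPolynomial σ K)})).radical := by
  rw [X, monomial_mem_radical_colon_weightedEdgeIdeal_iff (by simpa using hv)]
  simp

theorem X_mul_X_mem_radical_colon_weightedEdgeIdeal_iff {u v : σ} (hu : u ∈ s) (hv : v ∈ s) :
    X u * X v ∈ ((weightedEdgeIdeal K G s).colon
        (Ideal.span {∏ v ∈ s, (X v : MvPolynomial σ K)})).radical ↔ G.Adj u v := by
  have hsupp : ∀ w, w ∈ (Finsupp.single u 1 + Finsupp.single v 1).support ↔ w = u ∨ w = v := by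
    intro w
    rw [Finsupp.mem_support_iff, Finsupp.add_apply, Finsupp.single_apply, Finsupp.single_apply]
    grind
  rw [X, X, monomial_mul, one_mul, monomial_mem_radical_colon_weightedEdgeIdeal_iff]
  · simp only [hsupp]
    constructor
    · rintro ⟨i, j, hij, hi | hi, hj | hj⟩ <;> subst i j
      exacts [(hij.ne rfl).elim, hij, hij.symm, (hij.ne rfl).elim]
    · exact fun h => ⟨u, v, h, .inl rfl, .inr rfl⟩
  · intro w hw
    rcases (hsupp w).1 hw with rfl | rfl <;> assumption

theorem X_mem_colon_weightedEdgeIdeal_of_adj {u v : σ} (hu : u ∈ s) (hv : v ∉ s)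
    (huv : G.Adj u v) :
    X v ∈ (weightedEdgeIdeal K G s).colon (Ideal.span {∏ v ∈ s, (X v : MvPolynomial σ K)}) := by
  rw [X, monomial_mem_colon_prod_X_iff, monomial_mem_weightedEdgeIdeal_iff]
  refine ⟨u, v, huv, ?_⟩
  simp only [Finsupp.add_apply, Finsupp.finsetSum_single_one_apply]
  simp [hu, hv, huv.ne]

end MvPolynomial

open scoped Classical in
theorem stmt19_general (K : Type*) [Field K] (n : ℕ) (G : SimpleGraph (Fin n))
    (t : ℕ)
    (f : Fin t → Fin n) (hinj : Function.Injective f)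
    (hcycle : ∀ i j : Fin t, G.Adj (f i) (f j) ↔
      (j.val = (i.val + 1) % t ∨ i.val = (j.val + 1) % t))
    (R : Ideal (MvPolynomial (Fin n) K))
    (hR : R = (Submodule.colon
        (Ideal.span {p : MvPolynomial (Fin n) K | ∃ i j, G.Adj i j ∧
          p = (X i * X j) ^ (if i ∈ Set.range f ∧ j ∈ Set.range f then 2 else 1)})
        (Ideal.span {∏ i : Fin t, (X (f i) : MvPolynomial (Fin n) K)})).radical) :
    Ideal.span
        ({p : MvPolynomial (Fin n) K | ∃ i : Fin t,
            p = X (f i) * X (f ⟨(i.val + 1) % t, Nat.mod_lt _ i.pos⟩)}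
          ∪ {p | ∃ j, j ∉ Set.range f ∧ (∃ i : Fin t, G.Adj (f i) j) ∧ p = X j}) ≤ R
      ∧ (∀ i : Fin t, (X (f i) : MvPolynomial (Fin n) K) ∉ R)
      ∧ (∀ i j : Fin t, (X (f i) * X (f j) : MvPolynomial (Fin n) K) ∈ R ↔
          (j.val = (i.val + 1) % t ∨ i.val = (j.val + 1) % t)) := by
  set s := Finset.univ.image f
  have hs : ∀ i, f i ∈ s := fun i => Finset.mem_image_of_mem f (Finset.mem_univ i)
  replace hR : R = ((weightedEdgeIdeal K G s).colon
      (Ideal.span {∏ v ∈ s, (X v : MvPolynomial (Fin n) K)})).radical := by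
    rw [hR, Finset.prod_image hinj.injOn]
    simp only [s, weightedEdgeIdeal, ← Fintype.coe_image_univ, Finset.mem_coe]
  subst hR
  refine ⟨Ideal.span_le.2 ?_, fun i => X_notMem_radical_colon_weightedEdgeIdeal (hs i),
    fun i j => (X_mul_X_mem_radical_colon_weightedEdgeIdeal_iff (hs i) (hs j)).trans (hcycle i j)⟩
  rintro p (⟨i, rfl⟩ | ⟨v, hv, ⟨i, hiv⟩, rfl⟩)
  · exact (X_mul_X_mem_radical_colon_weightedEdgeIdeal_iff (hs _) (hs _)).2
      ((hcycle _ _).2 (.inl rfl))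
  · have hv : v ∉ s := by simpa [s] using hv
    exact Ideal.le_radical (X_mem_colon_weightedEdgeIdeal_of_adj (hs i) hv hiv)

open scoped Classical in
/-- Let `G` contain an induced cycle `C` of length `t ∉ {3,5}`
(given by the injective map `f`), and weight the edges of `G` by `2` inside
`G[V(C)]` and `1` elsewhere.  Then `√(I(G_w) : ∏_{v ∈ V(C)} v)` contains
`I(C)` together with all neighbours of `V(C)` outside `V(C)`, and its generators
involving only vertices of `V(C)` are exactly the edges of `C`: no variable
`x_v`, `v ∈ V(C)`, lies in the radical, and a product `x_u x_v` with
`u, v ∈ V(C)` lies in it precisely when `uv` is an edge of `C`. -/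
theorem stmt19 (K : Type*) [Field K] (n : ℕ) (G : SimpleGraph (Fin n))
    (t : ℕ) (ht : 3 ≤ t) (ht3 : t ≠ 3) (ht5 : t ≠ 5)
    (f : Fin t → Fin n) (hinj : Function.Injective f)
    (hcycle : ∀ i j : Fin t, G.Adj (f i) (f j) ↔
      (j.val = (i.val + 1) % t ∨ i.val = (j.val + 1) % t))
    (R : Ideal (MvPolynomial (Fin n) K))
    (hR : R = (Submodule.colon
        (Ideal.span {p : MvPolynomial (Fin n) K | ∃ i j, G.Adj i j ∧
          p = (X i * X j) ^ (if i ∈ Set.range f ∧ j ∈ Set.range f then 2 else 1)})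
        (Ideal.span {∏ i : Fin t, (X (f i) : MvPolynomial (Fin n) K)})).radical) :
    Ideal.span
        ({p : MvPolynomial (Fin n) K | ∃ i : Fin t,
            p = X (f i) * X (f ⟨(i.val + 1) % t, Nat.mod_lt _ i.pos⟩)}
          ∪ {p | ∃ j, j ∉ Set.range f ∧ (∃ i : Fin t, G.Adj (f i) j) ∧ p = X j}) ≤ R
      ∧ (∀ i : Fin t, (X (f i) : MvPolynomial (Fin n) K) ∉ R)
      ∧ (∀ i j : Fin t, (X (f i) * X (f j) : MvPolynomial (Fin n) K) ∈ R ↔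
          (j.val = (i.val + 1) % t ∨ i.val = (j.val + 1) % t)) :=
  stmt19_general K n G t f hinj hcycle R hR
end
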